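/- Let Q, N > 0 with Q > 4N, and define S_G(P) = N(Q−N−P)/Q for P ∈ [P1, P2] and S_G(P) = S_ℓ(P) otherwise on [0, Q], where P1, P2 are the roots of (P+N)² = QP. Then S_G is the convex envelope of S_ℓ on [0, Q]: S_G is convex, S_G ≤ S_ℓ pointwise, and any convex function below S_ℓ on [0, Q] is below S_G. -/

import Mathlib

/-!
Write `a = √Q`, `b = √P` and let `L(P) = N (Q - N - P) / Q` be the bitangent. Then
`Sl - L = N (a b - P - N)² / (Q ((a - b)² + N)) ≥ 0`, so `L` lies below `Sl` and touches it
exactly where `√(Q P) = P + N`, i.e. at the roots `P1 < P2` of `(P + N)² = Q P`; there the slope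
of `Sl` is `-N / Q`, so `L` is tangent. Off `(P1, P2)` we have `√(Q P) ≤ P + N`, i.e.
`N ≥ b (a - b)`, which bounds the numerator of `Sl''` below by `(a - b) (a - 2 b)² ≥ 0`. Hence the
derivative of `S_G` (`Sl'` off `[P1, P2]`, `-N / Q` on it) is monotone and `S_G` is convex.
A convex `φ ≤ Sl` lies on `[P1, P2]` below its chord, whose ends lie below `L(Pᵢ) = Sl(Pᵢ)`, so
`φ ≤ L = S_G` there; elsewhere `S_G = Sl`.
-/

open Real Set

noncomputable def Sl (Q N P : ℝ) : ℝ :=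
  (Real.sqrt Q - Real.sqrt P) ^ 2 * N / ((Real.sqrt Q - Real.sqrt P) ^ 2 + N)

noncomputable def P1 (Q N : ℝ) : ℝ := (Q - 2 * N - Real.sqrt (Q ^ 2 - 4 * Q * N)) / 2
noncomputable def P2 (Q N : ℝ) : ℝ := (Q - 2 * N + Real.sqrt (Q ^ 2 - 4 * Q * N)) / 2

noncomputable def SG (Q N P : ℝ) : ℝ :=
  if P ∈ Set.Icc (P1 Q N) (P2 Q N) then N * (Q - N - P) / Q else Sl Q N P

open Filter Topology

theorem hasDerivAt_of_eventuallyEq_Iic_Ici {f g h : ℝ → ℝ} {c d : ℝ} (hg : HasDerivAt g d c)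
    (hh : HasDerivAt h d c) (hfg : f =ᶠ[𝓝[≤] c] g) (hfh : f =ᶠ[𝓝[≥] c] h) :
    HasDerivAt f d c := by
  have hleft := hg.hasDerivWithinAt.congr_of_eventuallyEq hfg (hfg.eq_of_nhdsWithin self_mem_Iic)
  have hright := hh.hasDerivWithinAt.congr_of_eventuallyEq hfh (hfh.eq_of_nhdsWithin self_mem_Ici)
  simpa only [Iic_union_Ici, hasDerivWithinAt_univ] using hleft.union hright

theorem ConvexOn.le_of_mem_segment_of_le_concaveOn {E : Type*} [AddCommGroup E] [Module ℝ E]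
    {s : Set E} {φ ψ : E → ℝ} (hφ : ConvexOn ℝ s φ) (hψ : ConcaveOn ℝ s ψ) {x y z : E}
    (hx : x ∈ s) (hy : y ∈ s) (hφx : φ x ≤ ψ x) (hφy : φ y ≤ ψ y) (hz : z ∈ segment ℝ x y) :
    φ z ≤ ψ z := by
  have := (hφ.sub hψ).le_on_segment hx hy hz
  simp only [Pi.sub_apply] at this
  linarith [max_le (sub_nonpos.2 hφx) (sub_nonpos.2 hφy)]

theorem sqrt_mul_sqrt_le_add {Q N p : ℝ} (hp : 0 ≤ p) (hN : 0 ≤ N) (h : Q * p ≤ (p + N) ^ 2) :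
    √Q * √p ≤ p + N := by
  rw [← sqrt_mul' Q hp]
  exact sqrt_le_iff.2 ⟨by linarith, h⟩

theorem sqrt_mul_sqrt_eq_add {Q N p : ℝ} (hp : 0 ≤ p) (hN : 0 ≤ N) (h : Q * p = (p + N) ^ 2) :
    √Q * √p = p + N := by
  rw [← sqrt_mul' Q hp, h, sqrt_sq (by linarith)]

section Roots

variable {Q N : ℝ} (hN : 0 < N) (hNQ : 4 * N < Q)
include hN hNQ

lemma P1_pos : 0 < P1 Q N := by
  have : √(Q ^ 2 - 4 * Q * N) < Q - 2 * N := (sqrt_lt' (by linarith)).2 (by nlinarith)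
  unfold P1; linarith

lemma P1_lt_P2 : P1 Q N < P2 Q N := by
  have : 0 < √(Q ^ 2 - 4 * Q * N) := sqrt_pos.2 (by nlinarith)
  unfold P1 P2; linarith

lemma P2_lt : P2 Q N < Q := by
  have : √(Q ^ 2 - 4 * Q * N) < Q := (sqrt_lt' (by linarith)).2 (by nlinarith)
  unfold P2; linarith

lemma sub_P1_mul_sub_P2 (p : ℝ) : (p - P1 Q N) * (p - P2 Q N) = (p + N) ^ 2 - Q * p := by
  unfold P1 P2
  linear_combination (-1 / 4 : ℝ) * sq_sqrt (show 0 ≤ Q ^ 2 - 4 * Q * N by nlinarith)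

lemma sqrt_mul_sqrt_le_of_notMem_Ioo {p : ℝ} (hp : 0 ≤ p) (hp' : p ∉ Ioo (P1 Q N) (P2 Q N)) :
    √Q * √p ≤ p + N := by
  refine sqrt_mul_sqrt_le_add hp hN.le ?_
  have : 0 ≤ (p - P1 Q N) * (p - P2 Q N) := by
    rcases le_or_gt p (P1 Q N) with h1 | h1
    · exact mul_nonneg_of_nonpos_of_nonpos (by linarith) (by linarith [P1_lt_P2 hN hNQ])
    · exact mul_nonneg (by linarith) (by linarith [not_and.1 hp' h1])
  linarith [sub_P1_mul_sub_P2 hN hNQ p]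

lemma pos_of_mem_pair {p : ℝ} (hp : p ∈ ({P1 Q N, P2 Q N} : Set ℝ)) : 0 < p := by
  rcases hp with rfl | rfl <;> linarith [P1_pos hN hNQ, P1_lt_P2 hN hNQ]

lemma sqrt_mul_sqrt_eq_of_mem_pair {p : ℝ} (hp : p ∈ ({P1 Q N, P2 Q N} : Set ℝ)) :
    √Q * √p = p + N := by
  refine sqrt_mul_sqrt_eq_add (pos_of_mem_pair hN hNQ hp).le hN.le ?_
  have : (p - P1 Q N) * (p - P2 Q N) = 0 := by
    rcases hp with rfl | rfl <;> ring
  linarith [sub_P1_mul_sub_P2 hN hNQ p]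

end Roots

noncomputable def bitangent (Q N P : ℝ) : ℝ := N * (Q - N - P) / Q

noncomputable def slDen (Q N P : ℝ) : ℝ := (√Q - √P) ^ 2 + N

noncomputable def Sl' (Q N P : ℝ) : ℝ := N ^ 2 * (1 - √Q / √P) / slDen Q N P ^ 2

noncomputable def Sl'' (Q N P : ℝ) : ℝ :=
  N ^ 2 * (√Q / (2 * √P ^ 3) * slDen Q N P - 2 * (1 - √Q / √P) ^ 2) / slDen Q N P ^ 3

section Sl

variable {Q N P : ℝ}

lemma slDen_pos (hN : 0 < N) : 0 < slDen Q N P := by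
  unfold slDen; positivity

lemma Sl_eq_sub_div (hN : 0 < N) : Sl Q N P = N - N ^ 2 / slDen Q N P := by
  have := (slDen_pos hN (Q := Q) (P := P)).ne'
  unfold Sl; unfold slDen at this ⊢
  field_simp
  ring

lemma Sl_sub_bitangent (hQ : 0 < Q) (hN : 0 < N) (hP : 0 ≤ P) :
    Sl Q N P - bitangent Q N P = N * (√Q * √P - (P + N)) ^ 2 / (Q * slDen Q N P) := by
  have hD := (slDen_pos hN (Q := Q) (P := P)).ne'
  rw [Sl_eq_sub_div hN, bitangent]
  unfold slDen at hD ⊢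
  field_simp
  linear_combination (N + P - √P ^ 2) * sq_sqrt hQ.le + (N + P - Q) * sq_sqrt hP

lemma bitangent_le_Sl (hQ : 0 < Q) (hN : 0 < N) (hP : 0 ≤ P) : bitangent Q N P ≤ Sl Q N P := by
  have : 0 ≤ Sl Q N P - bitangent Q N P := by
    rw [Sl_sub_bitangent hQ hN hP]
    have := slDen_pos hN (Q := Q) (P := P)
    positivity
  linarith

lemma Sl_eq_bitangent (hQ : 0 < Q) (hN : 0 < N) (hP : 0 ≤ P) (hj : √Q * √P = P + N) :
    Sl Q N P = bitangent Q N P := by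
  simpa [hj, sub_eq_zero] using Sl_sub_bitangent hQ hN hP

lemma Sl'_eq_neg_div (hQ : 0 < Q) (hN : 0 < N) (hP : 0 < P) (hj : √Q * √P = P + N) :
    Sl' Q N P = -N / Q := by
  have hb : 0 < √P := sqrt_pos.2 hP
  have hQa : Q = √Q ^ 2 := (sq_sqrt hQ.le).symm
  have hNb : N = √Q * √P - √P ^ 2 := by rw [sq_sqrt hP.le]; linarith
  have hba : √P < √Q := sqrt_lt_sqrt hP.le (by nlinarith)
  rw [Sl', slDen]
  generalize √Q = a, √P = b at *
  subst hQa hNb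
  have : a - b ≠ 0 := sub_ne_zero.2 hba.ne'
  field_simp
  ring

lemma hasDerivAt_slDen (hP : 0 < P) : HasDerivAt (slDen Q N) (1 - √Q / √P) P := by
  have := (((hasDerivAt_sqrt hP.ne').const_sub √Q).pow 2).add_const N
  refine this.congr_deriv ?_
  have : √P ≠ 0 := (sqrt_pos.2 hP).ne'
  field_simp
  ring

lemma hasDerivAt_Sl (hN : 0 < N) (hP : 0 < P) : HasDerivAt (Sl Q N) (Sl' Q N P) P := by
  have hfun : Sl Q N = fun P => N - N ^ 2 / slDen Q N P := funext fun _ => Sl_eq_sub_div hN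
  rw [hfun]
  have := (((hasDerivAt_slDen (Q := Q) hP).inv (slDen_pos hN).ne').const_mul (N ^ 2)).const_sub N
  refine this.congr_deriv ?_
  rw [Sl']
  ring

lemma hasDerivAt_Sl' (hN : 0 < N) (hP : 0 < P) : HasDerivAt (Sl' Q N) (Sl'' Q N P) P := by
  have hb : √P ≠ 0 := (sqrt_pos.2 hP).ne'
  have hg := ((hasDerivAt_const P √Q).div (hasDerivAt_sqrt hP.ne') hb).const_sub 1
  have hD := (slDen_pos hN (Q := Q) (P := P)).ne'
  have := (hg.const_mul (N ^ 2)).div ((hasDerivAt_slDen hP).pow 2) (pow_ne_zero 2 hD)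
  refine this.congr_deriv ?_
  simp only [Pi.div_apply, Pi.pow_apply, Sl'']
  field_simp
  ring

lemma Sl''_nonneg (hN : 0 < N) (hP : 0 < P) (hPQ : P ≤ Q) (hj : √Q * √P ≤ P + N) :
    0 ≤ Sl'' Q N P := by
  have hb : 0 < √P := sqrt_pos.2 hP
  have hba : √P ≤ √Q := sqrt_le_sqrt hPQ
  have hNb : √P * (√Q - √P) ≤ N := by nlinarith [sq_sqrt hP.le]
  have hD := slDen_pos hN (Q := Q) (P := P)
  have key : 0 ≤ √Q * slDen Q N P - 4 * √P * (√Q - √P) ^ 2 := by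
    unfold slDen
    nlinarith [mul_nonneg (sub_nonneg.2 hba) (sq_nonneg (√Q - 2 * √P)),
      mul_nonneg (sqrt_nonneg Q) (sub_nonneg.2 hNb)]
  have hsplit : √Q / (2 * √P ^ 3) * slDen Q N P - 2 * (1 - √Q / √P) ^ 2
      = (√Q * slDen Q N P - 4 * √P * (√Q - √P) ^ 2) / (2 * √P ^ 3) := by
    field_simp
    ring
  rw [Sl'', hsplit]
  exact div_nonneg (mul_nonneg (sq_nonneg N) (div_nonneg key (by positivity))) (by positivity)

lemma monotoneOn_Sl' (hN : 0 < N) {s : Set ℝ} (hs : Convex ℝ s) (hs0 : s ⊆ Ioc 0 Q)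
    (hj : ∀ p ∈ s, √Q * √p ≤ p + N) : MonotoneOn (Sl' Q N) s := by
  refine monotoneOn_of_hasDerivWithinAt_nonneg hs
    (fun p hp => (hasDerivAt_Sl' hN (hs0 hp).1).continuousAt.continuousWithinAt)
    (fun p hp => (hasDerivAt_Sl' hN (hs0 (interior_subset hp)).1).hasDerivWithinAt)
    fun p hp => ?_
  have hps := interior_subset hp
  exact Sl''_nonneg hN (hs0 hps).1 (hs0 hps).2 (hj p hps)

lemma continuous_Sl (hN : 0 < N) : Continuous (Sl Q N) :=
  (by fun_prop : Continuous fun P => (√Q - √P) ^ 2 * N).div (by fun_prop)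
    fun _ => (slDen_pos hN).ne'

end Sl

lemma hasDerivAt_bitangent {Q N : ℝ} (x : ℝ) : HasDerivAt (bitangent Q N) (-N / Q) x :=
  ((((hasDerivAt_id x).const_sub (Q - N)).const_mul N).div_const Q).congr_deriv (by ring)

lemma concaveOn_bitangent {Q N : ℝ} {s : Set ℝ} (hs : Convex ℝ s) :
    ConcaveOn ℝ s (bitangent Q N) := by
  refine ⟨hs, fun x _ y _ a b _ _ hab => le_of_eq ?_⟩
  obtain rfl : b = 1 - a := by linarith
  simp only [bitangent, smul_eq_mul]
  ring

noncomputable def SG' (Q N P : ℝ) : ℝ :=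
  if P ∈ Icc (P1 Q N) (P2 Q N) then -N / Q else Sl' Q N P

lemma SG_eqOn_bitangent {Q N : ℝ} : EqOn (SG Q N) (bitangent Q N) (Icc (P1 Q N) (P2 Q N)) :=
  fun _ hp => if_pos hp

lemma SG_le_Sl {Q N P : ℝ} (hQ : 0 < Q) (hN : 0 < N) (hP : 0 ≤ P) : SG Q N P ≤ Sl Q N P := by
  unfold SG
  split_ifs
  · exact bitangent_le_Sl hQ hN hP
  · exact le_rfl

section SG

variable {Q N : ℝ} (hQ : 0 < Q) (hN : 0 < N) (hNQ : 4 * N < Q)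
include hQ hN hNQ

lemma Sl_eq_bitangent_of_mem_pair {p : ℝ} (hp : p ∈ ({P1 Q N, P2 Q N} : Set ℝ)) :
    Sl Q N p = bitangent Q N p :=
  Sl_eq_bitangent hQ hN (pos_of_mem_pair hN hNQ hp).le (sqrt_mul_sqrt_eq_of_mem_pair hN hNQ hp)

lemma Sl'_eq_neg_div_of_mem_pair {p : ℝ} (hp : p ∈ ({P1 Q N, P2 Q N} : Set ℝ)) :
    Sl' Q N p = -N / Q :=
  Sl'_eq_neg_div hQ hN (pos_of_mem_pair hN hNQ hp) (sqrt_mul_sqrt_eq_of_mem_pair hN hNQ hp)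

lemma SG_eqOn_Sl : EqOn (SG Q N) (Sl Q N) (Ioo (P1 Q N) (P2 Q N))ᶜ := by
  intro p hp
  by_cases hmem : p ∈ Icc (P1 Q N) (P2 Q N)
  · rw [SG_eqOn_bitangent hmem, Sl_eq_bitangent_of_mem_pair hQ hN hNQ
      (Icc_sdiff_Ioo_same (P1_lt_P2 hN hNQ).le ▸ ⟨hmem, hp⟩)]
  · rw [SG, if_neg hmem]

lemma SG'_eqOn_Sl' : EqOn (SG' Q N) (Sl' Q N) (Ioo (P1 Q N) (P2 Q N))ᶜ := by
  intro p hp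
  by_cases hmem : p ∈ Icc (P1 Q N) (P2 Q N)
  · rw [SG', if_pos hmem, Sl'_eq_neg_div_of_mem_pair hQ hN hNQ
      (Icc_sdiff_Ioo_same (P1_lt_P2 hN hNQ).le ▸ ⟨hmem, hp⟩)]
  · rw [SG', if_neg hmem]

lemma continuous_SG : Continuous (SG Q N) := by
  have hbit : Continuous (bitangent Q N) := by unfold bitangent; fun_prop
  refine continuous_if (fun p hp => ?_) hbit.continuousOn (continuous_Sl hN).continuousOn
  rw [ofPred_mem_eq, frontier_Icc (P1_lt_P2 hN hNQ).le] at hp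
  exact (Sl_eq_bitangent_of_mem_pair hQ hN hNQ hp).symm

lemma hasDerivAt_SG {p : ℝ} (hp : 0 < p) : HasDerivAt (SG Q N) (SG' Q N p) p := by
  have hP12 := P1_lt_P2 hN hNQ
  have hleft : EqOn (SG Q N) (Sl Q N) (Iic (P1 Q N)) :=
    (SG_eqOn_Sl hQ hN hNQ).mono fun _ hx h => not_lt.2 (mem_Iic.1 hx) (mem_Ioo.1 h).1
  have hright : EqOn (SG Q N) (Sl Q N) (Ici (P2 Q N)) :=
    (SG_eqOn_Sl hQ hN hNQ).mono fun _ hx h => not_lt.2 (mem_Ici.1 hx) (mem_Ioo.1 h).2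
  have hSl := hasDerivAt_Sl (Q := Q) hN hp
  rcases lt_trichotomy p (P1 Q N) with h1 | rfl | h1
  · rw [SG'_eqOn_Sl' hQ hN hNQ fun h => lt_asymm h1 h.1]
    exact hSl.congr_of_eventuallyEq (hleft.eventuallyEq_of_mem (Iic_mem_nhds h1))
  · rw [SG'_eqOn_Sl' hQ hN hNQ fun h => lt_irrefl _ h.1]
    refine hasDerivAt_of_eventuallyEq_Iic_Ici hSl ?_
      (hleft.eventuallyEq_of_mem self_mem_nhdsWithin)
      (SG_eqOn_bitangent.eventuallyEq_of_mem (Icc_mem_nhdsGE hP12))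
    rw [Sl'_eq_neg_div_of_mem_pair hQ hN hNQ (mem_insert _ _)]
    exact hasDerivAt_bitangent _
  rcases lt_trichotomy p (P2 Q N) with h2 | rfl | h2
  · rw [SG', if_pos ⟨h1.le, h2.le⟩]
    exact (hasDerivAt_bitangent p).congr_of_eventuallyEq
      (SG_eqOn_bitangent.eventuallyEq_of_mem (Icc_mem_nhds h1 h2))
  · rw [SG'_eqOn_Sl' hQ hN hNQ fun h => lt_irrefl _ h.2]
    refine hasDerivAt_of_eventuallyEq_Iic_Ici ?_ hSl
      (SG_eqOn_bitangent.eventuallyEq_of_mem (Icc_mem_nhdsLE hP12))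
      (hright.eventuallyEq_of_mem self_mem_nhdsWithin)
    rw [Sl'_eq_neg_div_of_mem_pair hQ hN hNQ (mem_insert_of_mem _ rfl)]
    exact hasDerivAt_bitangent _
  · rw [SG'_eqOn_Sl' hQ hN hNQ fun h => lt_asymm h2 h.2]
    exact hSl.congr_of_eventuallyEq (hright.eventuallyEq_of_mem (Ici_mem_nhds h2))

lemma monotoneOn_SG' : MonotoneOn (SG' Q N) (Ioo 0 Q) := by
  have hP1 := P1_pos hN hNQ
  have hP12 := P1_lt_P2 hN hNQ
  have hP2 := P2_lt hN hNQ
  have hleft : MonotoneOn (SG' Q N) (Ioc 0 (P1 Q N)) := by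
    refine (monotoneOn_Sl' hN (convex_Ioc _ _) (Ioc_subset_Ioc_right (by linarith))
      fun p hp => sqrt_mul_sqrt_le_of_notMem_Ioo hN hNQ hp.1.le fun h => ?_).congr ?_
    · exact not_lt.2 hp.2 h.1
    · exact ((SG'_eqOn_Sl' hQ hN hNQ).mono
        fun _ hx h => not_lt.2 (mem_Ioc.1 hx).2 (mem_Ioo.1 h).1).symm
  have hmid : MonotoneOn (SG' Q N) (Icc (P1 Q N) (P2 Q N)) := fun x hx y hy _ => by
    rw [SG', SG', if_pos hx, if_pos hy]
  have hright : MonotoneOn (SG' Q N) (Ico (P2 Q N) Q) := by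
    refine (monotoneOn_Sl' hN (convex_Ico _ _) (fun p hp => ⟨by linarith [hp.1], hp.2.le⟩)
      fun p hp => sqrt_mul_sqrt_le_of_notMem_Ioo hN hNQ (by linarith [hp.1]) fun h => ?_).congr ?_
    · exact not_lt.2 hp.1 h.2
    · exact ((SG'_eqOn_Sl' hQ hN hNQ).mono
        fun _ hx h => not_lt.2 (mem_Ico.1 hx).1 (mem_Ioo.1 h).2).symm
  have hleft' : MonotoneOn (SG' Q N) (Ioc 0 (P2 Q N)) := by
    simpa only [Ioc_union_Icc_eq_Ioc hP1 hP12.le] using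
      hleft.union_right hmid (isGreatest_Ioc hP1) (isLeast_Icc hP12.le)
  simpa only [Ioc_union_Ico_eq_Ioo (hP1.trans hP12) hP2] using
    hleft'.union_right hright (isGreatest_Ioc (hP1.trans hP12)) (isLeast_Ico hP2)

lemma convexOn_SG : ConvexOn ℝ (Icc 0 Q) (SG Q N) := by
  have hderiv : ∀ p ∈ Ioo 0 Q, HasDerivAt (SG Q N) (SG' Q N p) p :=
    fun p hp => hasDerivAt_SG hQ hN hNQ hp.1
  refine MonotoneOn.convexOn_of_deriv (convex_Icc 0 Q) (continuous_SG hQ hN hNQ).continuousOn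
    ?_ ?_ <;> rw [interior_Icc]
  · exact fun p hp => (hderiv p hp).differentiableAt.differentiableWithinAt
  · exact (monotoneOn_SG' hQ hN hNQ).congr fun p hp => (hderiv p hp).deriv.symm

end SG

/-- For `Q > 4N`, `S_G` is the convex envelope of `Sℓ` on `[0, Q]`: it is convex,
pointwise below `Sℓ`, and dominates any convex minorant of `Sℓ` on `[0, Q]`. -/
theorem SG_convex_envelope (Q N : ℝ) (hQ : 0 < Q) (hN : 0 < N) (h : Q > 4 * N) :
    ConvexOn ℝ (Set.Icc 0 Q) (SG Q N) ∧
    (∀ P ∈ Set.Icc (0 : ℝ) Q, SG Q N P ≤ Sl Q N P) ∧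
    (∀ φ : ℝ → ℝ, ConvexOn ℝ (Set.Icc 0 Q) φ →
      (∀ P ∈ Set.Icc (0 : ℝ) Q, φ P ≤ Sl Q N P) →
      ∀ P ∈ Set.Icc (0 : ℝ) Q, φ P ≤ SG Q N P) := by
  refine ⟨convexOn_SG hQ hN h, fun P hP => SG_le_Sl hQ hN hP.1, fun φ hφ hφSl P hP => ?_⟩
  by_cases hmem : P ∈ Icc (P1 Q N) (P2 Q N)
  · have hP12 := P1_lt_P2 hN h
    have hP1 : P1 Q N ∈ Icc 0 Q := ⟨(P1_pos hN h).le, (hP12.trans (P2_lt hN h)).le⟩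
    have hP2 : P2 Q N ∈ Icc 0 Q := ⟨((P1_pos hN h).trans hP12).le, (P2_lt hN h).le⟩
    rw [SG_eqOn_bitangent hmem]
    refine hφ.le_of_mem_segment_of_le_concaveOn (concaveOn_bitangent (convex_Icc 0 Q)) hP1 hP2
      ?_ ?_ (segment_eq_Icc hP12.le ▸ hmem)
    · exact (hφSl _ hP1).trans_eq (Sl_eq_bitangent_of_mem_pair hQ hN h (mem_insert _ _))
    · exact (hφSl _ hP2).trans_eq (Sl_eq_bitangent_of_mem_pair hQ hN h (mem_insert_of_mem _ rfl))
  · rw [SG, if_neg hmem]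
    exact hφSl P hP
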